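/- arXiv:1806.06549 — 4 statements merged into one kernel-verified Lean document; each statement's English description precedes it below -/
import Mathlib

section
/- Let A be an (n+1)×(n+1) matrix over a commutative ring, with n ≥ 1. Denote by A[i;k] the matrix obtained by deleting row i and column k, and by A[ij;kl] the matrix obtained by deleting rows i,j and columns k,l (i<j, k<l). Then det A · det A[ij;kl] = det A[i;k] · det A[j;l] − det A[i;l] · det A[j;k]. -/
/-!
Multiply `A` by the identity matrix whose columns `k` and `l` are replaced by columns `i` and `j`
of `adj A`. Since `A * adj A = det A • 1`, the product is `A` with columns `k`, `l` replaced by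
`det A • eᵢ`, `det A • eⱼ`, whose determinant is `(det A)²` times the complementary minor. The
second factor has as determinant a `2 × 2` minor of `adj A`, so
`det A * (2 × 2 minor of adj A) = (det A)² * (complementary minor of A)`. Cancelling `det A` is
legitimate for the generic matrix over `ℤ[Xᵢⱼ]` and the identity then specialises to any `A`.
Finally the entries of `adj A` are signed `(n+1) × (n+1)` minors.
-/

open Matrix

theorem Pi.single_comp_of_injective {α β M : Type*} [DecidableEq α] [DecidableEq β] [Zero M]
    {f : α → β} (hf : Function.Injective f) (a : α) (x : M) :
    Pi.single (f a) x ∘ f = Pi.single a x :=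
  Function.update_comp_eq_of_injective _ hf a x

namespace Matrix

theorem submatrix_updateCol_of_injective {α m n p q : Type*} [DecidableEq n] [DecidableEq q]
    (A : Matrix m n α) (f : p → m) {g : q → n} (hg : Function.Injective g) (c : q) (v : m → α) :
    (A.updateCol (g c) v).submatrix f g = (A.submatrix f g).updateCol c (v ∘ f) := by
  ext a b
  by_cases hb : b = c
  · simp [hb]
  · simp [hb, hg.ne hb]

variable {R : Type*} [CommRing R]

section Adjugate

variable {m : Type*} [Fintype m] [DecidableEq m]

theorem det_updateCol_single_one (A : Matrix m m R) (r c : m) :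
    (A.updateCol c (Pi.single r 1)).det = A.adjugate c r := by
  rw [← cramer_apply, cramer_eq_adjugate_mulVec, mulVec_single_one, col_apply]

theorem det_one_updateCol_updateCol {k l : m} (hkl : k ≠ l) (u v : m → R) :
    (((1 : Matrix m m R).updateCol l v).updateCol k u).det = u k * v l - u l * v k := by
  -- a rank-two perturbation `1 + U * V` of `1`, and `det (1 + U * V) = det (1 + V * U)`
  let U : Matrix m (Fin 2) R :=
    of fun p => ![u p - (1 : Matrix m m R) p k, v p - (1 : Matrix m m R) p l]
  let V : Matrix (Fin 2) m R := of ![Pi.single k 1, Pi.single l 1]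
  have hrank2 : ((1 : Matrix m m R).updateCol l v).updateCol k u = 1 + U * V := by
    ext p q
    by_cases hqk : q = k <;> by_cases hql : q = l <;>
      simp_all [U, V, Fin.sum_univ_two, mul_apply, one_apply]
  rw [hrank2, det_one_add_mul_comm, det_fin_two]
  simp [U, V, one_apply, hkl, hkl.symm]
  ring

theorem mul_updateCol_adjugate_col (A : Matrix m m R) (i j k l : m) :
    A * ((1 : Matrix m m R).updateCol l (A.adjugate.col j)).updateCol k (A.adjugate.col i) =
      (A.updateCol l (Pi.single j A.det)).updateCol k (Pi.single i A.det) := by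
  have hcol (c : m) : A *ᵥ A.adjugate.col c = Pi.single c A.det := by
    rw [← mulVec_single_one, mulVec_mulVec, mul_adjugate, smul_mulVec, one_mulVec,
      ← Pi.single_smul', smul_eq_mul, mul_one]
  rw [mul_updateCol, mul_updateCol, mul_one, hcol, hcol]

theorem det_mul_adjugate_two_minor_eq (A : Matrix m m R) {k l : m} (hkl : k ≠ l) (i j : m) :
    A.det * (A.adjugate k i * A.adjugate l j - A.adjugate l i * A.adjugate k j) =
      A.det * (A.det * ((A.updateCol l (Pi.single j 1)).updateCol k (Pi.single i 1)).det) := by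
  have h := congrArg det (mul_updateCol_adjugate_col A i j k l)
  rw [det_mul, det_one_updateCol_updateCol hkl] at h
  simp only [col_apply] at h
  have hsingle (c : m) : Pi.single c A.det = A.det • Pi.single c (1 : R) := by
    rw [← Pi.single_smul', smul_eq_mul, mul_one]
  rw [h, hsingle i, det_updateCol_smul, updateCol_comm _ hkl.symm, hsingle j, det_updateCol_smul,
    updateCol_comm _ hkl]

theorem adjugate_two_minor_eq (A : Matrix m m R) {k l : m} (hkl : k ≠ l) (i j : m) :
    A.adjugate k i * A.adjugate l j - A.adjugate l i * A.adjugate k j =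
      A.det * ((A.updateCol l (Pi.single j 1)).updateCol k (Pi.single i 1)).det := by
  have generic := mul_left_cancel₀ (det_mvPolynomialX_ne_zero m ℤ)
    (det_mul_adjugate_two_minor_eq (mvPolynomialX m m ℤ) hkl i j)
  let f := MvPolynomial.aeval (R := ℤ) fun p : m × m => A p.1 p.2
  have hA : (mvPolynomialX m m ℤ).map f = A := mvPolynomialX_mapMatrix_aeval ℤ A
  have hadj (a b : m) : f ((mvPolynomialX m m ℤ).adjugate a b) = A.adjugate a b := by
    rw [← hA]
    exact congrFun₂ (AlgHom.map_adjugate f _) a b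
  have hsingle (c : m) : f ∘ Pi.single c 1 = Pi.single c 1 := by
    ext
    simp [Pi.single_apply, apply_ite f]
  simpa only [map_sub, map_mul, hadj, AlgHom.map_det, AlgHom.mapMatrix_apply, map_updateCol,
    hsingle, hA] using congrArg f generic

end Adjugate

theorem det_updateCol_updateCol_single_one {n : ℕ} (A : Matrix (Fin (n + 2)) (Fin (n + 2)) R)
    (i k : Fin (n + 2)) (j l : Fin (n + 1)) :
    ((A.updateCol (k.succAbove l) (Pi.single (i.succAbove j) 1)).updateCol k (Pi.single i 1)).det =
      (-1) ^ ((i : ℕ) + k) * ((-1) ^ ((j : ℕ) + l) *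
        (A.submatrix (i.succAbove ∘ j.succAbove) (k.succAbove ∘ l.succAbove)).det) := by
  rw [det_updateCol_single_one, adjugate_fin_succ_eq_det_submatrix,
    submatrix_updateCol_of_injective _ _ Fin.succAbove_right_injective,
    Pi.single_comp_of_injective Fin.succAbove_right_injective, det_updateCol_single_one,
    adjugate_fin_succ_eq_det_submatrix, submatrix_submatrix]

end Matrix

/-- The Desnanot–Jacobi identity: for an `(n+2) × (n+2)` matrix `A` over a commutative ring
(i.e. size at least `2 × 2`), with rows `i < j` and columns `k < l`,
`det A · det A[ij;kl] = det A[i;k] · det A[j;l] − det A[i;l] · det A[j;k]`,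
where minors are obtained by deleting the indicated rows and columns
(realized via `Fin.succAbove` embeddings). -/
theorem desnanot_jacobi {R : Type*} [CommRing R] (n : ℕ)
    (A : Matrix (Fin (n + 2)) (Fin (n + 2)) R)
    (i j k l : Fin (n + 2)) (hij : i < j) (hkl : k < l) :
    A.det *
      (A.submatrix
        (fun a : Fin n => i.succAbove ((j.pred (Fin.ne_zero_of_lt hij)).succAbove a))
        (fun a : Fin n => k.succAbove ((l.pred (Fin.ne_zero_of_lt hkl)).succAbove a))).det
    = (A.submatrix i.succAbove k.succAbove).det * (A.submatrix j.succAbove l.succAbove).det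
      - (A.submatrix i.succAbove l.succAbove).det * (A.submatrix j.succAbove k.succAbove).det := by
  set j' := j.pred (Fin.ne_zero_of_lt hij)
  set l' := l.pred (Fin.ne_zero_of_lt hkl)
  have key := adjugate_two_minor_eq A hkl.ne i j
  have hminor := det_updateCol_updateCol_single_one A i k j' l'
  rw [Fin.succAbove_pred_of_lt _ _ hij, Fin.succAbove_pred_of_lt _ _ hkl] at hminor
  have hj : (j : ℕ) = j' + 1 := by rw [← Fin.val_succ, Fin.succ_pred]
  have hl : (l : ℕ) = l' + 1 := by rw [← Fin.val_succ, Fin.succ_pred]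
  simp only [hminor, adjugate_fin_succ_eq_det_submatrix, Function.comp_def, hj, hl] at key
  refine ((isUnit_neg_one (α := R)).pow ((i : ℕ) + k + j' + l')).mul_left_cancel ?_
  linear_combination -key
end

section
/- Let y : ℝ → ℝ be twice differentiable with y''(x) = x·y(x), suppose y is not identically zero, y² is integrable on every interval [x, ∞), and D₂(x) := x·y(x)² − y'(x)² tends to 0 as x → +∞. Then D₂(x) = −∫_x^∞ y(s)² ds < 0 for every real x. -/
/-!
By the Airy equation, `D₂' = y² + 2xyy' - 2y'·xy = y²`, so the fundamental theorem of calculus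
on `[x, ∞)` together with `D₂ → 0` gives `D₂(x) = -∫_x^∞ y²`. This integral is positive because
`y` cannot vanish on `(x, ∞)`: the pair `(y, y')` solves a linear first-order system, locally
Lipschitz in the state, so by uniqueness a solution vanishing on an open set vanishes everywhere.
-/

open MeasureTheory Filter Set Topology

lemma hasDerivAt_mul_sq_sub_deriv_sq {y : ℝ → ℝ} {x : ℝ} (hy : DifferentiableAt ℝ y x)
    (hy' : DifferentiableAt ℝ (deriv y) x) (hairy : deriv (deriv y) x = x * y x) :
    HasDerivAt (fun t ↦ t * y t ^ 2 - deriv y t ^ 2) (y x ^ 2) x := by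
  have hy'' := hy'.hasDerivAt
  rw [hairy] at hy''
  refine (((hasDerivAt_id' x).fun_mul (hy.hasDerivAt.fun_pow 2)).fun_sub
    (hy''.fun_pow 2)).congr_deriv ?_
  ring

lemma lipschitzWith_snd_mul_fst (c : ℝ) :
    LipschitzWith (max 1 ‖c‖₊) (fun p : ℝ × ℝ ↦ (p.2, c * p.1)) :=
  LipschitzWith.prodMk LipschitzWith.prod_snd
    (by rw [← mul_one ‖c‖₊]; exact (lipschitzWith_smul c).comp LipschitzWith.prod_fst)

theorem eq_zero_of_deriv_deriv_eq_mul {q y : ℝ → ℝ} (hq : Continuous q)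
    (hy : Differentiable ℝ y) (hy' : Differentiable ℝ (deriv y))
    (hode : ∀ t, deriv (deriv y) t = q t * y t) {t₀ : ℝ} (h₀ : y t₀ = 0)
    (h₀' : deriv y t₀ = 0) : y = 0 := by
  ext t
  obtain ⟨A, B, ht, ht₀⟩ : ∃ A B, t ∈ Ioo A B ∧ t₀ ∈ Ioo A B :=
    ⟨min t t₀ - 1, max t t₀ + 1, by grind, by grind⟩
  obtain ⟨C, hC⟩ := (isCompact_Icc (a := A) (b := B)).exists_bound_of_continuousOn hq.continuousOn
  -- `(y, y')` and `0` both solve `(u, v)' = (v, q u)`, whose field is Lipschitz on `(A, B)`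
  have hv : ∀ s ∈ Ioo A B, LipschitzOnWith (max 1 C.toNNReal)
      (fun p : ℝ × ℝ ↦ (p.2, q s * p.1)) univ := by
    intro s hs
    have hqs : ‖q s‖₊ ≤ C.toNNReal :=
      norm_toNNReal (a := q s) ▸ Real.toNNReal_le_toNNReal (hC s (Ioo_subset_Icc_self hs))
    exact ((lipschitzWith_snd_mul_fst (q s)).weaken (max_le_max le_rfl hqs)).lipschitzOnWith
  have hsol : ∀ s ∈ Ioo A B,
      HasDerivAt (fun s ↦ (y s, deriv y s)) (deriv y s, q s * y s) s ∧ (y s, deriv y s) ∈ univ := by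
    intro s _
    refine ⟨(hy s).hasDerivAt.prodMk ?_, trivial⟩
    simpa [hode s] using (hy' s).hasDerivAt
  have hzero : ∀ s ∈ Ioo A B,
      HasDerivAt (fun _ ↦ (0 : ℝ × ℝ)) (0, q s * 0) s ∧ (0 : ℝ × ℝ) ∈ univ :=
    fun s _ ↦ ⟨(hasDerivAt_const s 0).congr_deriv (by ext <;> simp), trivial⟩
  exact congrArg Prod.fst
    (ODE_solution_unique_of_mem_Ioo hv ht₀ hsol hzero (by simp [h₀, h₀']) ht)

theorem eq_zero_of_deriv_deriv_eq_mul_of_eqOn {q y : ℝ → ℝ} (hq : Continuous q)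
    (hy : Differentiable ℝ y) (hy' : Differentiable ℝ (deriv y))
    (hode : ∀ t, deriv (deriv y) t = q t * y t) {U : Set ℝ} (hU : IsOpen U) (hne : U.Nonempty)
    (hzero : EqOn y 0 U) : y = 0 := by
  obtain ⟨t₀, ht₀⟩ := hne
  have hloc : y =ᶠ[𝓝 t₀] 0 := eventuallyEq_of_mem (hU.mem_nhds ht₀) hzero
  exact eq_zero_of_deriv_deriv_eq_mul hq hy hy' hode (hzero ht₀) (by simp [hloc.deriv_eq])

theorem setIntegral_pos_of_continuousOn_of_isOpen {α : Type*} [TopologicalSpace α]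
    [MeasurableSpace α] [OpensMeasurableSpace α] {μ : Measure α} [μ.IsOpenPosMeasure]
    {f : α → ℝ} {U : Set α} {a : α} (hU : IsOpen U) (hf : ContinuousOn f U)
    (hint : IntegrableOn f U μ) (hnn : ∀ t ∈ U, 0 ≤ f t) (ha : a ∈ U) (hfa : f a ≠ 0) :
    0 < ∫ t in U, f t ∂μ := by
  rw [setIntegral_pos_iff_support_of_nonneg_ae (ae_restrict_of_forall_mem hU.measurableSet hnn)
    hint, Set.inter_comm]
  exact (hf.isOpen_inter_preimage hU isOpen_ne).measure_pos μ ⟨a, ha, hfa⟩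

/-- A nontrivial solution of the Airy equation `y'' = x·y` with `y²` integrable on every
`[x,∞)` and `D₂(x) = x·y(x)² − y'(x)² → 0` as `x → +∞` satisfies
`D₂(x) = −∫_x^∞ y(s)² ds < 0` for every real `x`. -/
theorem airy_D2_neg (y : ℝ → ℝ)
    (h1 : Differentiable ℝ y) (h2 : Differentiable ℝ (deriv y))
    (hairy : ∀ x : ℝ, deriv (deriv y) x = x * y x)
    (hnz : ∃ x : ℝ, y x ≠ 0)
    (hint : ∀ x : ℝ, IntegrableOn (fun s : ℝ => y s ^ 2) (Set.Ici x))
    (hlim : Tendsto (fun x : ℝ => x * y x ^ 2 - (deriv y x) ^ 2) atTop (nhds 0)) :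
    ∀ x : ℝ, x * y x ^ 2 - (deriv y x) ^ 2 = -∫ s in Set.Ici x, y s ^ 2 ∧
      x * y x ^ 2 - (deriv y x) ^ 2 < 0 := by
  intro x
  have hIoi : IntegrableOn (fun s ↦ y s ^ 2) (Ioi x) := (hint x).mono_set Ioi_subset_Ici_self
  have hD : x * y x ^ 2 - deriv y x ^ 2 = -∫ s in Ici x, y s ^ 2 := by
    rw [integral_Ici_eq_integral_Ioi, integral_Ioi_of_hasDerivAt_of_tendsto'
      (fun t _ ↦ hasDerivAt_mul_sq_sub_deriv_sq (h1 t) (h2 t) (hairy t)) hIoi hlim]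
    ring
  refine ⟨hD, ?_⟩
  obtain ⟨s, hs, hys⟩ : ∃ s ∈ Ioi x, y s ≠ 0 := by
    by_contra! hzero
    obtain ⟨x₀, hx₀⟩ := hnz
    have hy0 : y = 0 := eq_zero_of_deriv_deriv_eq_mul_of_eqOn continuous_id h1 h2 hairy
      isOpen_Ioi nonempty_Ioi hzero
    exact hx₀ (congrFun hy0 x₀)
  rw [hD, neg_lt_zero, integral_Ici_eq_integral_Ioi]
  exact setIntegral_pos_of_continuousOn_of_isOpen isOpen_Ioi
    (h1.continuous.pow 2).continuousOn hIoi (fun t _ ↦ sq_nonneg (y t)) hs (pow_ne_zero 2 hys)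
end

section
/- Let f : ℝ → ℝ be smooth (C^∞), and for n ≥ 0 define D_n(x) = det[f^{(j+k−2)}(x)]_{j,k=1..n} with D_0 = 1. Then for every n ≥ 1 and every x ∈ ℝ: D_{n−1}(x)·D_{n+1}(x) = D_n(x)·D_n''(x) − (D_n'(x))². -/
open Matrix Finset

namespace WHT

variable {R : Type*} [CommRing R] {m : ℕ}

def pm (m : ℕ) : Fin (m + 2) := ⟨m, by omega⟩

lemma pm_ne_last : pm m ≠ Fin.last (m + 1) := by
  simp [pm, Fin.ext_iff]

lemma castAdd_ne_pm (i : Fin m) : (Fin.castAdd 2 i) ≠ pm m := by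
  intro h
  have h2 : (i : ℕ) = m := congrArg Fin.val h
  have := i.isLt
  omega

lemma castAdd_ne_last (i : Fin m) : (Fin.castAdd 2 i) ≠ Fin.last (m + 1) := by
  intro h
  have h2 : (i : ℕ) = m + 1 := congrArg Fin.val h
  have := i.isLt
  omega

lemma natAdd_zero_eq : (Fin.natAdd m (0 : Fin 2)) = pm m := by
  simp [pm, Fin.ext_iff]

lemma natAdd_one_eq : (Fin.natAdd m (1 : Fin 2)) = Fin.last (m + 1) := by
  simp [Fin.ext_iff]

lemma mul_updateColumn (M N : Matrix (Fin (m+2)) (Fin (m+2)) R) (j : Fin (m+2))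
    (c : Fin (m+2) → R) :
    M * N.updateCol j c = (M * N).updateCol j (M.mulVec c) := by
  ext i k
  by_cases h : k = j
  · subst h
    simp [Matrix.mul_apply, Matrix.updateCol_apply, Matrix.mulVec, dotProduct]
  · simp [Matrix.mul_apply, Matrix.updateCol_apply, h]

lemma updateColumn_comm (N : Matrix (Fin (m+2)) (Fin (m+2)) R) {j j' : Fin (m+2)}
    (hjj : j ≠ j') (u v : Fin (m+2) → R) :
    (N.updateCol j u).updateCol j' v = (N.updateCol j' v).updateCol j u := by
  ext i k
  by_cases h1 : k = j' <;> by_cases h2 : k = j <;>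
    simp_all [Matrix.updateCol_apply]

lemma mulVec_adjugate_col (M : Matrix (Fin (m+2)) (Fin (m+2)) R) (j : Fin (m+2)) :
    M.mulVec (fun i => M.adjugate i j) = M.det • (Pi.single j (1:R) : Fin (m+2) → R) := by
  funext i
  have h := congrArg (fun N => N i j) (Matrix.mul_adjugate M)
  simp only [Matrix.mul_apply, Matrix.smul_apply, Matrix.one_apply, smul_eq_mul] at h
  simp only [Matrix.mulVec, dotProduct]
  rw [h]
  simp [Pi.single_apply, eq_comm]

lemma key (M : Matrix (Fin (m+2)) (Fin (m+2)) R) :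
    M.det * (M.adjugate (pm m) (pm m) * M.adjugate (Fin.last (m+1)) (Fin.last (m+1))
      - M.adjugate (pm m) (Fin.last (m+1)) * M.adjugate (Fin.last (m+1)) (pm m))
    = M.det ^ 2 * (M.submatrix (Fin.castAdd 2) (Fin.castAdd 2)).det := by
  classical
  set pl : Fin (m+2) := Fin.last (m+1) with hpl
  set B : Matrix (Fin (m+2)) (Fin (m+2)) R :=
    ((1 : Matrix (Fin (m+2)) (Fin (m+2)) R).updateCol (pm m) (fun i => M.adjugate i (pm m))).updateCol
      pl (fun i => M.adjugate i pl) with hB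
  have hBdet : B.det = M.adjugate (pm m) (pm m) * M.adjugate pl pl
      - M.adjugate (pm m) pl * M.adjugate pl (pm m) := by
    rw [← Matrix.det_submatrix_equiv_self finSumFinEquiv B]
    have hb : B.submatrix finSumFinEquiv finSumFinEquiv
        = Matrix.fromBlocks (1 : Matrix (Fin m) (Fin m) R)
            (Matrix.of fun i j => B (Fin.castAdd 2 i) (Fin.natAdd m j)) 0
            (Matrix.of fun i j => B (Fin.natAdd m i) (Fin.natAdd m j)) := by
      ext i j
      rcases i with i | i <;> rcases j with j | j
      · simp only [Matrix.submatrix_apply, finSumFinEquiv_apply_left, Matrix.fromBlocks_apply₁₁,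
          hB, Matrix.updateCol_apply]
        rw [if_neg (castAdd_ne_last j), if_neg (castAdd_ne_pm j)]
        simp [Matrix.one_apply, Fin.ext_iff]
      · simp
      · simp only [Matrix.submatrix_apply, finSumFinEquiv_apply_left, finSumFinEquiv_apply_right,
          Matrix.fromBlocks_apply₂₁, hB, Matrix.updateCol_apply, Matrix.zero_apply]
        rw [if_neg (castAdd_ne_last j), if_neg (castAdd_ne_pm j)]
        refine Matrix.one_apply_ne fun hc => ?_
        have h3 : m + (i : ℕ) = (j : ℕ) := congrArg Fin.val hc
        have := j.isLt
        omega
      · simp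
    rw [hb, Matrix.det_fromBlocks_zero₂₁, Matrix.det_one, one_mul, Matrix.det_fin_two]
    have h1 : pm m ≠ pl := pm_ne_last
    have h2 : pl ≠ pm m := Ne.symm pm_ne_last
    simp only [Matrix.of_apply, hB, Matrix.updateCol_apply, natAdd_zero_eq, natAdd_one_eq,
      ← hpl]
    simp [h1, h2, Fin.ext_iff, pm, hpl, Fin.val_last]
  have hMB : M * B = (M.updateCol (pm m)
        (M.det • (Pi.single (pm m) (1:R) : Fin (m+2) → R))).updateCol pl
      (M.det • (Pi.single pl (1:R) : Fin (m+2) → R)) := by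
    rw [hB, mul_updateColumn, mul_updateColumn, Matrix.mul_one, mulVec_adjugate_col,
      mulVec_adjugate_col]
  have hM2 : ((M.updateCol (pm m) (Pi.single (pm m) (1:R))).updateCol pl
      (Pi.single pl (1:R))).det = (M.submatrix (Fin.castAdd 2) (Fin.castAdd 2)).det := by
    rw [← Matrix.det_submatrix_equiv_self finSumFinEquiv]
    have hb : ((M.updateCol (pm m) (Pi.single (pm m) (1:R))).updateCol pl
          (Pi.single pl (1:R))).submatrix finSumFinEquiv finSumFinEquiv
        = Matrix.fromBlocks (M.submatrix (Fin.castAdd 2) (Fin.castAdd 2)) 0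
            (Matrix.of fun i j => ((M.updateCol (pm m) (Pi.single (pm m) (1:R))).updateCol pl
          (Pi.single pl (1:R))) (Fin.natAdd m i) (Fin.castAdd 2 j))
            (Matrix.of fun i j => ((M.updateCol (pm m) (Pi.single (pm m) (1:R))).updateCol pl
          (Pi.single pl (1:R))) (Fin.natAdd m i) (Fin.natAdd m j)) := by
      ext i j
      rcases i with i | i <;> rcases j with j | j
      · simp only [Matrix.submatrix_apply, finSumFinEquiv_apply_left, Matrix.fromBlocks_apply₁₁,
          Matrix.updateCol_apply]
        rw [if_neg (castAdd_ne_last j), if_neg (castAdd_ne_pm j)]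
      · simp only [Matrix.submatrix_apply, finSumFinEquiv_apply_left, finSumFinEquiv_apply_right,
          Matrix.fromBlocks_apply₁₂, Matrix.updateCol_apply, Matrix.zero_apply]
        by_cases h1 : Fin.natAdd m j = pl
        · rw [if_pos h1]
          exact Pi.single_eq_of_ne (castAdd_ne_last i) 1
        · rw [if_neg h1]
          have hval : m + (j : ℕ) ≠ m + 1 := fun hc => h1 (Fin.ext hc)
          have hjlt := j.isLt
          have h2 : Fin.natAdd m j = pm m := Fin.ext (show m + (j : ℕ) = m by omega)
          rw [if_pos h2]
          exact Pi.single_eq_of_ne (castAdd_ne_pm i) 1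
      · simp
      · simp
    rw [hb, Matrix.det_fromBlocks_zero₁₂]
    have h1 : pm m ≠ pl := pm_ne_last
    have h2 : pl ≠ pm m := Ne.symm pm_ne_last
    have hD : (Matrix.of fun i j => ((M.updateCol (pm m) (Pi.single (pm m) (1:R))).updateCol pl
          (Pi.single pl (1:R))) (Fin.natAdd m i) (Fin.natAdd m j)).det = (1 : R) := by
      rw [Matrix.det_fin_two]
      simp only [Matrix.of_apply, Matrix.updateCol_apply, natAdd_zero_eq, natAdd_one_eq, ← hpl]
      simp [h1, h2, Pi.single_apply, Fin.ext_iff, pm, hpl, Fin.val_last]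
    rw [hD, mul_one]
  have hMBdet : (M * B).det = M.det ^ 2 * (M.submatrix (Fin.castAdd 2) (Fin.castAdd 2)).det := by
    rw [hMB, Matrix.det_updateCol_smul,
      updateColumn_comm _ pm_ne_last, Matrix.det_updateCol_smul,
      updateColumn_comm _ (Ne.symm pm_ne_last), hM2]
    ring
  rw [← hBdet, ← Matrix.det_mul, hMBdet]

lemma adj_identity (M : Matrix (Fin (m+2)) (Fin (m+2)) R) :
    M.adjugate (pm m) (pm m) * M.adjugate (Fin.last (m+1)) (Fin.last (m+1))
      - M.adjugate (pm m) (Fin.last (m+1)) * M.adjugate (Fin.last (m+1)) (pm m)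
    = M.det * (M.submatrix (Fin.castAdd 2) (Fin.castAdd 2)).det := by
  classical
  let X : Matrix (Fin (m+2)) (Fin (m+2)) (MvPolynomial (Fin (m+2) × Fin (m+2)) ℤ) := Matrix.of fun i j => MvPolynomial.X (i, j)
  have hXdet : X.det ≠ 0 := by
    intro h0
    have h1 := congrArg (MvPolynomial.eval (fun p : Fin (m+2) × Fin (m+2) =>
      if p.1 = p.2 then (1:ℤ) else 0)) h0
    rw [map_zero, RingHom.map_det] at h1
    have h2 : (MvPolynomial.eval (fun p : Fin (m+2) × Fin (m+2) =>
        if p.1 = p.2 then (1:ℤ) else 0)).mapMatrix X = 1 := by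
      ext i j
      by_cases h : i = j <;> simp [X, Matrix.one_apply, h]
    rw [h2, Matrix.det_one] at h1
    exact one_ne_zero h1
  have hgen : X.adjugate (pm m) (pm m) * X.adjugate (Fin.last (m+1)) (Fin.last (m+1))
      - X.adjugate (pm m) (Fin.last (m+1)) * X.adjugate (Fin.last (m+1)) (pm m)
      = X.det * (X.submatrix (Fin.castAdd 2) (Fin.castAdd 2)).det := by
    apply mul_left_cancel₀ hXdet
    rw [key X]
    ring
  let φ : MvPolynomial (Fin (m+2) × Fin (m+2)) ℤ →+* R := MvPolynomial.eval₂Hom (Int.castRingHom R) (fun p => M p.1 p.2)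
  have hφX : φ.mapMatrix X = M := by
    ext i j
    simp [X, φ, MvPolynomial.eval₂Hom_X']
  have hadj : ∀ i j, φ (X.adjugate i j) = M.adjugate i j := by
    intro i j
    have h := congrArg (fun N => N i j) (φ.map_adjugate X)
    simpa [hφX] using h
  have hdet : φ X.det = M.det := by rw [RingHom.map_det, hφX]
  have hsub : φ (X.submatrix (Fin.castAdd 2) (Fin.castAdd 2)).det
      = (M.submatrix (Fin.castAdd 2) (Fin.castAdd 2)).det := by
    rw [RingHom.map_det]
    congr 1
    ext i j
    simp [X, φ, MvPolynomial.eval₂Hom_X']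
  have hfin := congrArg φ hgen
  simp only [_root_.map_mul, map_sub] at hfin
  rw [hadj, hadj, hadj, hadj, hdet, hsub] at hfin
  exact hfin


lemma jacobi (M : Matrix (Fin (m+2)) (Fin (m+2)) R) :
    (M.submatrix (pm m).succAbove (pm m).succAbove).det
        * (M.submatrix Fin.castSucc Fin.castSucc).det
      - (M.submatrix Fin.castSucc (pm m).succAbove).det
        * (M.submatrix (pm m).succAbove Fin.castSucc).det
    = M.det * (M.submatrix (Fin.castAdd 2) (Fin.castAdd 2)).det := by
  have h := adj_identity M
  rw [Matrix.adjugate_fin_succ_eq_det_submatrix, Matrix.adjugate_fin_succ_eq_det_submatrix,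
    Matrix.adjugate_fin_succ_eq_det_submatrix, Matrix.adjugate_fin_succ_eq_det_submatrix] at h
  have vm : ((pm m : Fin (m+2)) : ℕ) = m := rfl
  have vl : ((Fin.last (m+1) : Fin (m+2)) : ℕ) = m + 1 := rfl
  rw [vm, vl, Fin.succAbove_last] at h
  have p1 : ((-1 : R)) ^ (m + m) = 1 := Even.neg_one_pow ⟨m, rfl⟩
  have p2 : ((-1 : R)) ^ (m + 1 + (m + 1)) = 1 := Even.neg_one_pow ⟨m + 1, rfl⟩
  have p3 : ((-1 : R)) ^ (m + 1 + m) = -1 := Odd.neg_one_pow ⟨m, by ring⟩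
  have p4 : ((-1 : R)) ^ (m + (m + 1)) = -1 := Odd.neg_one_pow ⟨m, by ring⟩
  rw [p1, p2, p3, p4] at h
  linear_combination h


lemma det_updateColumn_expand {n : ℕ} (A : Matrix (Fin n) (Fin n) ℝ) (c : Fin n) (v : Fin n → ℝ) :
    (A.updateCol c v).det
      = ∑ σ : Equiv.Perm (Fin n), ((Equiv.Perm.sign σ : ℤ) : ℝ) *
          (v (σ c) * ∏ j ∈ univ.erase c, A (σ j) j) := by
  rw [Matrix.det_apply']
  refine Finset.sum_congr rfl fun σ _ => ?_
  congr 1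
  rw [← Finset.mul_prod_erase _ _ (Finset.mem_univ c)]
  congr 1
  · simp [Matrix.updateCol_apply]
  · refine Finset.prod_congr rfl fun j hj => ?_
    rw [Matrix.updateCol_apply, if_neg (Finset.ne_of_mem_erase hj)]

lemma hasDerivAt_det_col {n : ℕ} {M : ℝ → Matrix (Fin n) (Fin n) ℝ}
    {M' : Matrix (Fin n) (Fin n) ℝ} {x : ℝ}
    (h : ∀ i j, HasDerivAt (fun y => M y i j) (M' i j) x) :
    HasDerivAt (fun y => (M y).det)
      (∑ c : Fin n, ((M x).updateCol c (fun r => M' r c)).det) x := by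
  have key : ∀ σ : Equiv.Perm (Fin n), HasDerivAt (fun y => ∏ i, M y (σ i) i)
      (∑ c, (∏ j ∈ univ.erase c, M x (σ j) j) * M' (σ c) c) x := by
    intro σ
    have := HasDerivAt.fun_finsetProd (u := univ) (x := x)
      (f := fun i y => M y (σ i) i) (f' := fun i => M' (σ i) i) (fun i _ => h _ _)
    simpa [smul_eq_mul] using this
  have h2 : HasDerivAt (fun y => (M y).det)
      (∑ σ : Equiv.Perm (Fin n), ((Equiv.Perm.sign σ : ℤ) : ℝ) *
        (∑ c, (∏ j ∈ univ.erase c, M x (σ j) j) * M' (σ c) c)) x := by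
    have hdet : (fun y => (M y).det)
        = fun y => ∑ σ : Equiv.Perm (Fin n), ((Equiv.Perm.sign σ : ℤ) : ℝ) * ∏ i, M y (σ i) i :=
      funext fun y => Matrix.det_apply' _
    rw [hdet]
    exact HasDerivAt.fun_sum fun σ _ => (key σ).const_mul _
  convert h2 using 1
  simp_rw [Finset.mul_sum, det_updateColumn_expand]
  rw [Finset.sum_comm]
  refine Finset.sum_congr rfl fun σ _ => Finset.sum_congr rfl fun c _ => by ring

lemma succAbove_pm_val {m : ℕ} (k : Fin (m+1)) :
    (((pm m).succAbove k : Fin (m+2)) : ℕ) = if (k:ℕ) < m then (k:ℕ) else (k:ℕ)+1 := by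
  by_cases h : (k:ℕ) < m
  · rw [Fin.succAbove_of_castSucc_lt _ _ (Fin.lt_def.mpr (by simpa [pm] using h)), if_pos h]
    simp
  · rw [Fin.succAbove_of_le_castSucc _ _ (Fin.le_def.mpr (by simpa [pm] using Nat.le_of_not_lt h)),
      if_neg h]
    simp

lemma hasDerivAt_det_row {n : ℕ} {M : ℝ → Matrix (Fin n) (Fin n) ℝ}
    {M' : Matrix (Fin n) (Fin n) ℝ} {x : ℝ}
    (h : ∀ i j, HasDerivAt (fun y => M y i j) (M' i j) x) :
    HasDerivAt (fun y => (M y).det)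
      (∑ r : Fin n, ((M x).updateRow r (fun c => M' r c)).det) x := by
  have ht : ∀ i j, HasDerivAt (fun y => (M y)ᵀ i j) (M'ᵀ i j) x := fun i j => h j i
  have h0 := hasDerivAt_det_col (M := fun y => (M y)ᵀ) (M' := M'ᵀ) ht
  convert h0 using 1
  · funext y
    rw [Matrix.det_transpose]
  · refine Finset.sum_congr rfl fun r _ => ?_
    rw [Matrix.updateCol_transpose, Matrix.det_transpose]
    rfl

end WHT

open WHT in
/-- For smooth `f`, the Hankel–Wronskian determinants
`D_n(x) = det [f^{(j+k−2)}(x)]_{j,k=1..n}` (with `D_0 = 1`, which is the determinant of the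
empty matrix) satisfy `D_{n−1}·D_{n+1} = D_n·D_n'' − (D_n')²` for every `n ≥ 1`. -/
theorem wronskian_hankel_toda (f : ℝ → ℝ) (hf : ContDiff ℝ (⊤ : ℕ∞) f) :
    ∀ n : ℕ, 1 ≤ n → ∀ x : ℝ,
      (Matrix.of fun j k : Fin (n - 1) => iteratedDeriv ((j : ℕ) + (k : ℕ)) f x).det *
        (Matrix.of fun j k : Fin (n + 1) => iteratedDeriv ((j : ℕ) + (k : ℕ)) f x).det
      = (Matrix.of fun j k : Fin n => iteratedDeriv ((j : ℕ) + (k : ℕ)) f x).det *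
          deriv (deriv (fun y : ℝ =>
            (Matrix.of fun j k : Fin n => iteratedDeriv ((j : ℕ) + (k : ℕ)) f y).det)) x -
        (deriv (fun y : ℝ =>
            (Matrix.of fun j k : Fin n => iteratedDeriv ((j : ℕ) + (k : ℕ)) f y).det) x) ^ 2 := by
  intro n hn x₀
  obtain ⟨m, rfl⟩ : ∃ m, n = m + 1 := ⟨n - 1, by omega⟩
  -- the big Hankel matrix
  set H : ℝ → Matrix (Fin (m+2)) (Fin (m+2)) ℝ :=
    fun y => Matrix.of fun j k : Fin (m+2) => iteratedDeriv ((j : ℕ) + (k : ℕ)) f y with hH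
  have hder : ∀ (k : ℕ) (y : ℝ), HasDerivAt (iteratedDeriv k f) (iteratedDeriv (k+1) f y) y := by
    intro k y
    have hd : Differentiable ℝ (iteratedDeriv k f) :=
      hf.differentiable_iteratedDeriv k (by exact_mod_cast lt_top_iff_ne_top.mpr (by simp))
    have h1 := (hd y).hasDerivAt
    rw [iteratedDeriv_succ]
    exact h1
  -- first derivative
  have stepA : ∀ y : ℝ, HasDerivAt
      (fun z : ℝ => (Matrix.of fun j k : Fin (m+1) => iteratedDeriv ((j : ℕ) + (k : ℕ)) f z).det)
      (((H y).submatrix Fin.castSucc (pm m).succAbove).det) y := by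
    intro y
    have h0 := hasDerivAt_det_col
      (M := fun z => Matrix.of fun j k : Fin (m+1) => iteratedDeriv ((j : ℕ) + (k : ℕ)) f z)
      (M' := Matrix.of fun j k : Fin (m+1) => iteratedDeriv ((j : ℕ) + (k : ℕ) + 1) f y) (x := y)
      (fun i j => by simpa using hder ((i : ℕ) + (j : ℕ)) y)
    convert h0 using 1
    rw [Finset.sum_eq_single (Fin.last m)]
    · congr 1
      ext j k
      by_cases hk : k = Fin.last m
      · subst hk
        rw [Matrix.submatrix_apply, Matrix.updateCol_self]
        simp only [hH, Matrix.of_apply]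
        congr 1
        simp only [succAbove_pm_val, Fin.val_last, Fin.coe_castSucc]
        split_ifs <;> omega
      · rw [Matrix.submatrix_apply, Matrix.updateCol_ne hk]
        simp only [hH, Matrix.of_apply]
        have hklt : (k : ℕ) < m := by
          have := k.isLt
          have : (k : ℕ) ≠ m := fun hc => hk (Fin.ext (by simpa using hc))
          omega
        congr 1
        simp only [succAbove_pm_val, Fin.coe_castSucc]
        rw [if_pos hklt]
    · intro c _ hc
      have hclt : (c : ℕ) < m := by
        have := c.isLt
        have : (c : ℕ) ≠ m := fun hcc => hc (Fin.ext (by simpa using hcc))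
        omega
      refine Matrix.det_zero_of_column_eq (i := c) (j := ⟨(c : ℕ) + 1, by omega⟩)
        (fun hcc => by have := congrArg Fin.val hcc; simp at this) (fun k => ?_)
      rw [Matrix.updateCol_self, Matrix.updateCol_ne (fun hcc => by
        have := congrArg Fin.val hcc; simp at this)]
      simp only [Matrix.of_apply]
      congr 1
    · intro hl
      exact absurd (Finset.mem_univ _) hl
  -- second derivative
  have stepB : HasDerivAt (fun y : ℝ => ((H y).submatrix Fin.castSucc (pm m).succAbove).det)
      (((H x₀).submatrix (pm m).succAbove (pm m).succAbove).det) x₀ := by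
    have h0 := hasDerivAt_det_row
      (M := fun y => (H y).submatrix Fin.castSucc (pm m).succAbove)
      (M' := Matrix.of fun i j : Fin (m+1) =>
        iteratedDeriv ((Fin.castSucc i : ℕ) + (((pm m).succAbove j : Fin (m+2)) : ℕ) + 1) f x₀)
      (x := x₀) (fun i j => by simpa [hH] using hder _ x₀)
    convert h0 using 1
    rw [Finset.sum_eq_single (Fin.last m)]
    · congr 1
      ext i c
      by_cases hi : i = Fin.last m
      · subst hi
        rw [Matrix.submatrix_apply, Matrix.updateRow_self]
        simp only [hH, Matrix.of_apply]
        congr 1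
        simp only [succAbove_pm_val, Fin.val_last, Fin.coe_castSucc]
        split_ifs <;> omega
      · rw [Matrix.submatrix_apply, Matrix.updateRow_ne hi]
        simp only [Matrix.submatrix_apply, hH, Matrix.of_apply]
        have hilt : (i : ℕ) < m := by
          have := i.isLt
          have : (i : ℕ) ≠ m := fun hc => hi (Fin.ext (by simpa using hc))
          omega
        congr 1
        simp only [succAbove_pm_val, Fin.coe_castSucc]
        split_ifs <;> omega
    · intro r _ hr
      have hrlt : (r : ℕ) < m := by
        have := r.isLt
        have : (r : ℕ) ≠ m := fun hcc => hr (Fin.ext (by simpa using hcc))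
        omega
      refine Matrix.det_zero_of_row_eq (i := r) (j := ⟨(r : ℕ) + 1, by omega⟩)
        (fun hcc => by have := congrArg Fin.val hcc; simp at this) ?_
      funext c
      rw [Matrix.updateRow_self, Matrix.updateRow_ne (fun hcc => by
        have := congrArg Fin.val hcc; simp at this)]
      simp only [Matrix.submatrix_apply, hH, Matrix.of_apply]
      congr 1
      simp only [Fin.coe_castSucc, Fin.val_succ]
      omega
    · intro hl
      exact absurd (Finset.mem_univ _) hl
  have hD1 : deriv (fun y : ℝ =>
      (Matrix.of fun j k : Fin (m+1) => iteratedDeriv ((j : ℕ) + (k : ℕ)) f y).det)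
      = fun y => ((H y).submatrix Fin.castSucc (pm m).succAbove).det :=
    funext fun y => (stepA y).deriv
  have hD2 : deriv (deriv (fun y : ℝ =>
      (Matrix.of fun j k : Fin (m+1) => iteratedDeriv ((j : ℕ) + (k : ℕ)) f y).det)) x₀
      = ((H x₀).submatrix (pm m).succAbove (pm m).succAbove).det := by
    rw [hD1]
    exact stepB.deriv
  have hsymm : (H x₀).submatrix (pm m).succAbove Fin.castSucc
      = ((H x₀).submatrix Fin.castSucc (pm m).succAbove)ᵀ := by
    ext i j
    simp only [Matrix.submatrix_apply, Matrix.transpose_apply, hH, Matrix.of_apply]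
    congr 1
    omega
  have hjac := jacobi (H x₀)
  rw [hsymm, Matrix.det_transpose] at hjac
  have hDm : (Matrix.of fun j k : Fin (m + 1 - 1) => iteratedDeriv ((j : ℕ) + (k : ℕ)) f x₀).det
      = ((H x₀).submatrix (Fin.castAdd 2) (Fin.castAdd 2)).det := rfl
  have hDm1 : (Matrix.of fun j k : Fin (m+1) => iteratedDeriv ((j : ℕ) + (k : ℕ)) f x₀).det
      = ((H x₀).submatrix Fin.castSucc Fin.castSucc).det := rfl
  have hDm2 : (Matrix.of fun j k : Fin (m+1+1) => iteratedDeriv ((j : ℕ) + (k : ℕ)) f x₀).det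
      = (H x₀).det := rfl
  have hD1x : deriv (fun y : ℝ =>
      (Matrix.of fun j k : Fin (m+1) => iteratedDeriv ((j : ℕ) + (k : ℕ)) f y).det) x₀
      = ((H x₀).submatrix Fin.castSucc (pm m).succAbove).det := (stepA x₀).deriv
  rw [hDm, hDm1, hDm2, hD2, hD1x]
  linear_combination -hjac
end

section
/- Let n ≥ 1, let I ⊆ ℝ be an open interval, and let D_{n−1}, D_n, D_{n+1} : I → ℝ be differentiable with D_{n−1} and D_n nonvanishing on I. Suppose the functions a_n = D_{n−1}D_{n+1}/D_n² and b_n = D_{n+1}'/D_{n+1} − D_n'/D_n, b_{n−1} = D_n'/D_n − D_{n−1}'/D_{n−1} satisfy the string equation a_n·(b_n + b_{n−1}) = n on I (and D_{n+1} is nonvanishing where needed). Then (D_{n+1}/D_{n−1})' = n·(D_n/D_{n−1})² on I. -/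
theorem wronskian_eq_of_string_equation {K : Type*} [Field K] {m d p m' d' p' c : K}
    (hm : m ≠ 0) (hd : d ≠ 0) (hp : p ≠ 0)
    (h : m * p / d ^ 2 * ((p' / p - d' / d) + (d' / d - m' / m)) = c) :
    p' * m - p * m' = c * d ^ 2 := by
  have telescope : (p' / p - d' / d) + (d' / d - m' / m) = p' / p - m' / m := by ring
  rw [telescope] at h
  field_simp at h
  linear_combination h

theorem string_equation_identity_general (n : ℕ) (a b : ℝ)
    (Dm Dn Dp : ℝ → ℝ)
    (hdm : ∀ x ∈ Set.Ioo a b, DifferentiableAt ℝ Dm x)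
    (hdp : ∀ x ∈ Set.Ioo a b, DifferentiableAt ℝ Dp x)
    (hm0 : ∀ x ∈ Set.Ioo a b, Dm x ≠ 0)
    (hn0 : ∀ x ∈ Set.Ioo a b, Dn x ≠ 0)
    (hp0 : ∀ x ∈ Set.Ioo a b, Dp x ≠ 0)
    (hstring : ∀ x ∈ Set.Ioo a b,
      (Dm x * Dp x / (Dn x) ^ 2) *
        ((deriv Dp x / Dp x - deriv Dn x / Dn x) +
          (deriv Dn x / Dn x - deriv Dm x / Dm x)) = n) :
    ∀ x ∈ Set.Ioo a b,
      deriv (fun t : ℝ => Dp t / Dm t) x = n * (Dn x / Dm x) ^ 2 := by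
  intro x hx
  have wronskian :=
    wronskian_eq_of_string_equation (hm0 x hx) (hn0 x hx) (hp0 x hx) (hstring x hx)
  calc deriv (fun t : ℝ => Dp t / Dm t) x
      = (deriv Dp x * Dm x - Dp x * deriv Dm x) / Dm x ^ 2 :=
        deriv_div (hdp x hx) (hdm x hx) (hm0 x hx)
    _ = n * (Dn x / Dm x) ^ 2 := by rw [wronskian]; ring

/-- If on an open interval `(a,b)` the differentiable functions `D_{n−1}, D_n, D_{n+1}`
(`Dm, Dn, Dp`) are nonvanishing and the string equation
`a_n (b_n + b_{n−1}) = n` holds, where `a_n = Dm·Dp/Dn²`,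
`b_n = Dp'/Dp − Dn'/Dn`, `b_{n−1} = Dn'/Dn − Dm'/Dm`, then
`(Dp/Dm)' = n (Dn/Dm)²` on `(a,b)`. -/
theorem string_equation_identity (n : ℕ) (hn : 1 ≤ n) (a b : ℝ)
    (Dm Dn Dp : ℝ → ℝ)
    (hdm : ∀ x ∈ Set.Ioo a b, DifferentiableAt ℝ Dm x)
    (hdn : ∀ x ∈ Set.Ioo a b, DifferentiableAt ℝ Dn x)
    (hdp : ∀ x ∈ Set.Ioo a b, DifferentiableAt ℝ Dp x)
    (hm0 : ∀ x ∈ Set.Ioo a b, Dm x ≠ 0)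
    (hn0 : ∀ x ∈ Set.Ioo a b, Dn x ≠ 0)
    (hp0 : ∀ x ∈ Set.Ioo a b, Dp x ≠ 0)
    (hstring : ∀ x ∈ Set.Ioo a b,
      (Dm x * Dp x / (Dn x) ^ 2) *
        ((deriv Dp x / Dp x - deriv Dn x / Dn x) +
          (deriv Dn x / Dn x - deriv Dm x / Dm x)) = n) :
    ∀ x ∈ Set.Ioo a b,
      deriv (fun t : ℝ => Dp t / Dm t) x = n * (Dn x / Dm x) ^ 2 :=
  string_equation_identity_general n a b Dm Dn Dp hdm hdp hm0 hn0 hp0 hstring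
end
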